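/- arXiv:2303.09390 — 5 statements merged into one kernel-verified Lean document; each statement's English description precedes it below -/
import Mathlib

section
/- Let a₁, …, aₙ be vectors in ℝ^d and b₁, …, bₙ be real scalars with |bᵢ| ≤ ζ for all i. Let λ > 0 and define the positive definite matrix U = ∑_{i=1}^n aᵢaᵢᵀ + λI. Then ‖∑_{i=1}^n bᵢaᵢ‖²_{U⁻¹} ≤ n·ζ², where ‖v‖²_{U⁻¹} = vᵀU⁻¹v. -/
open Matrix

lemma vecMulVec_mulVec' {d : ℕ} (a w : Fin d → ℝ) :
    (vecMulVec a a) *ᵥ w = (a ⬝ᵥ w) • a := by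
  ext i
  simp [vecMulVec_apply, mulVec, dotProduct, Finset.mul_sum, mul_comm, mul_left_comm]

lemma sum_mulVec' {d n : ℕ} (M : Fin n → Matrix (Fin d) (Fin d) ℝ) (w : Fin d → ℝ) :
    (∑ i, M i) *ᵥ w = ∑ i, (M i *ᵥ w) := by
  ext j
  simp [mulVec, dotProduct, Finset.sum_apply, Matrix.sum_apply, Finset.sum_mul]
  rw [Finset.sum_comm]

lemma dotProduct_sum' {d n : ℕ} (w : Fin d → ℝ) (v : Fin n → (Fin d → ℝ)) :
    w ⬝ᵥ (∑ i, v i) = ∑ i, w ⬝ᵥ v i := by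
  simp [dotProduct, Finset.sum_apply, Finset.mul_sum]
  rw [Finset.sum_comm]

lemma quadform {d n : ℕ} (a : Fin n → (Fin d → ℝ)) (lam : ℝ)
    (U : Matrix (Fin d) (Fin d) ℝ)
    (hU : U = (∑ i, vecMulVec (a i) (a i)) + lam • (1 : Matrix (Fin d) (Fin d) ℝ))
    (w : Fin d → ℝ) :
    w ⬝ᵥ (U *ᵥ w) = (∑ i, (a i ⬝ᵥ w) ^ 2) + lam * (w ⬝ᵥ w) := by
  subst hU
  rw [add_mulVec, dotProduct_add, sum_mulVec', dotProduct_sum']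
  congr 1
  · refine Finset.sum_congr rfl fun i _ => ?_
    rw [vecMulVec_mulVec', dotProduct_smul, smul_eq_mul, dotProduct_comm, sq]
  · rw [smul_mulVec, one_mulVec, dotProduct_smul, smul_eq_mul]

lemma posdef' {d n : ℕ} (a : Fin n → (Fin d → ℝ)) (lam : ℝ) (hlam : 0 < lam)
    (U : Matrix (Fin d) (Fin d) ℝ)
    (hU : U = (∑ i, vecMulVec (a i) (a i)) + lam • (1 : Matrix (Fin d) (Fin d) ℝ)) :
    U.PosDef := by
  rw [posDef_iff_dotProduct_mulVec]
  constructor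
  · subst hU
    ext i j
    simp [conjTranspose_apply, Matrix.sum_apply, Matrix.add_apply, vecMulVec_apply,
      Matrix.one_apply, mul_comm]
    rcases eq_or_ne i j with h | h <;> simp [h, eq_comm]
  · intro x hx
    have h := quadform a lam U hU x
    simp only [RCLike.star_def, starRingEnd_apply, star_trivial]
    calc (0:ℝ) < lam * (x ⬝ᵥ x) := by
          apply mul_pos hlam
          have := dotProduct_self_eq_zero (v := x)
          rcases lt_or_eq_of_le (Finset.sum_nonneg fun i _ => mul_self_nonneg (x i) : (0:ℝ) ≤ x ⬝ᵥ x) with h' | h'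
          · exact h'
          · exact absurd (this.1 h'.symm) hx
      _ ≤ _ := by
          rw [h]
          exact le_add_of_nonneg_left (Finset.sum_nonneg fun i _ => sq_nonneg _)

open Matrix in
theorem stmt_4 (d n : ℕ) (a : Fin n → (Fin d → ℝ)) (b : Fin n → ℝ) (ζ lam : ℝ)
    (hb : ∀ i, |b i| ≤ ζ) (hlam : 0 < lam)
    (U : Matrix (Fin d) (Fin d) ℝ)
    (hU : U = (∑ i, vecMulVec (a i) (a i)) + lam • (1 : Matrix (Fin d) (Fin d) ℝ)) :
    (∑ i, b i • a i) ⬝ᵥ (U⁻¹ *ᵥ (∑ i, b i • a i)) ≤ (n : ℝ) * ζ ^ 2 := by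
  have hPD := posdef' a lam hlam U hU
  set v : Fin d → ℝ := ∑ i, b i • a i with hv
  set w : Fin d → ℝ := U⁻¹ *ᵥ v with hw
  have hUw : U *ᵥ w = v := by
    rw [hw, mulVec_mulVec, Matrix.mul_nonsing_inv U ((Matrix.isUnit_iff_isUnit_det U).1 hPD.isUnit),
      one_mulVec]
  set S : ℝ := v ⬝ᵥ w with hSdef
  have hS : S = (∑ i, (a i ⬝ᵥ w) ^ 2) + lam * (w ⬝ᵥ w) := by
    rw [hSdef, dotProduct_comm, ← hUw, quadform a lam U hU w]
  have hS2 : S = ∑ i, b i * (a i ⬝ᵥ w) := by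
    rw [hSdef, hv, dotProduct_comm, dotProduct_sum']
    exact Finset.sum_congr rfl fun i _ => by
      rw [dotProduct_smul, smul_eq_mul, dotProduct_comm]
  have hwnn : (0:ℝ) ≤ w ⬝ᵥ w := Finset.sum_nonneg fun i _ => mul_self_nonneg (w i)
  have hSnn : 0 ≤ S := by
    rw [hS]
    have := Finset.sum_nonneg (fun i (_ : i ∈ Finset.univ) => sq_nonneg (a i ⬝ᵥ w))
    nlinarith
  have hbsq : (∑ i, b i ^ 2) ≤ (n : ℝ) * ζ ^ 2 := by
    calc (∑ i, b i ^ 2) ≤ ∑ _i : Fin n, ζ ^ 2 := by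
          refine Finset.sum_le_sum fun i _ => ?_
          rw [← sq_abs]
          exact pow_le_pow_left₀ (abs_nonneg _) (hb i) 2
      _ = (n : ℝ) * ζ ^ 2 := by simp [Finset.sum_const, mul_comm]
  have hCnn : 0 ≤ (n : ℝ) * ζ ^ 2 :=
    le_trans (Finset.sum_nonneg fun i _ => sq_nonneg (b i)) hbsq
  have hCS : S ^ 2 ≤ (∑ i, b i ^ 2) * (∑ i, (a i ⬝ᵥ w) ^ 2) := by
    rw [hS2]; exact Finset.sum_mul_sq_le_sq_mul_sq _ _ _
  have hts : (∑ i, (a i ⬝ᵥ w) ^ 2) ≤ S := by nlinarith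
  have key : S ^ 2 ≤ ((n : ℝ) * ζ ^ 2) * S := by
    calc S ^ 2 ≤ (∑ i, b i ^ 2) * (∑ i, (a i ⬝ᵥ w) ^ 2) := hCS
      _ ≤ ((n : ℝ) * ζ ^ 2) * S := by
          apply mul_le_mul hbsq hts (Finset.sum_nonneg fun i _ => sq_nonneg _) hCnn
  rcases eq_or_lt_of_le hSnn with h0 | h0
  · rw [← h0]; exact hCnn
  · have : S * S ≤ ((n : ℝ) * ζ ^ 2) * S := by nlinarith
    exact le_of_mul_le_mul_right this h0
end

section
/- Let x₁, …, xₖ ∈ ℝ^d, let C be a subset of {1,…,K}, let λ > 0 and define U = λI + ∑_{k∈C} xₖxₖᵀ. Let η₁,…,η_K be scalars with |ηₖ| ≤ ζ. Then for any x ∈ ℝ^d, |xᵀ U⁻¹ ∑_{k∈C} ηₖ xₖ| ≤ ζ·√|C|·‖x‖_{U⁻¹}. -/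
open Matrix

private lemma sum_mulVec'_s5 {n : ℕ} {ι : Type*} (s : Finset ι)
    (M : ι → Matrix (Fin n) (Fin n) ℝ) (v : Fin n → ℝ) :
    (∑ k ∈ s, M k) *ᵥ v = ∑ k ∈ s, M k *ᵥ v := by
  classical
  induction s using Finset.induction with
  | empty => simp [Matrix.zero_mulVec]
  | insert a s h ih => simp [Finset.sum_insert h, add_mulVec, ih]

private lemma dotProduct_sum'_s5 {n : ℕ} {ι : Type*} (s : Finset ι)
    (a : Fin n → ℝ) (f : ι → (Fin n → ℝ)) :
    a ⬝ᵥ (∑ k ∈ s, f k) = ∑ k ∈ s, a ⬝ᵥ f k := by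
  simp only [dotProduct, Finset.sum_apply, Finset.mul_sum]
  exact Finset.sum_comm

private lemma sum_dotProduct' {n : ℕ} {ι : Type*} (s : Finset ι)
    (f : ι → (Fin n → ℝ)) (a : Fin n → ℝ) :
    (∑ k ∈ s, f k) ⬝ᵥ a = ∑ k ∈ s, f k ⬝ᵥ a := by
  simp only [dotProduct, Finset.sum_apply, Finset.sum_mul]
  exact Finset.sum_comm

private lemma dot_vecMulVec {n : ℕ} (a w v b : Fin n → ℝ) :
    a ⬝ᵥ (vecMulVec w v *ᵥ b) = (a ⬝ᵥ w) * (v ⬝ᵥ b) := by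
  simp only [dotProduct, mulVec, vecMulVec_apply, Finset.mul_sum, Finset.sum_mul]
  rw [Finset.sum_comm]
  apply Finset.sum_congr rfl; intro j _
  apply Finset.sum_congr rfl; intro i _
  ring

private lemma dot_symm {n : ℕ} {W : Matrix (Fin n) (Fin n) ℝ} (hW : W.IsHermitian)
    (a b : Fin n → ℝ) : a ⬝ᵥ (W *ᵥ b) = b ⬝ᵥ (W *ᵥ a) := by
  have hWt : Wᵀ = W := by
    have := hW; rwa [Matrix.IsHermitian, conjTranspose_eq_transpose_of_trivial] at this
  rw [Matrix.dotProduct_mulVec, ← Matrix.vecMul_transpose, hWt, dotProduct_comm]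

private lemma psd_nonneg {n : ℕ} {W : Matrix (Fin n) (Fin n) ℝ} (hW : W.PosSemidef)
    (a : Fin n → ℝ) : 0 ≤ a ⬝ᵥ (W *ᵥ a) := by
  simpa using hW.dotProduct_mulVec_nonneg a

private lemma cs_psd {n : ℕ} {W : Matrix (Fin n) (Fin n) ℝ} (hW : W.PosSemidef)
    (a b : Fin n → ℝ) :
    (a ⬝ᵥ (W *ᵥ b)) ^ 2 ≤ (a ⬝ᵥ (W *ᵥ a)) * (b ⬝ᵥ (W *ᵥ b)) := by
  have key : ∀ t : ℝ, 0 ≤ (b ⬝ᵥ (W *ᵥ b)) * (t * t) + (2 * (a ⬝ᵥ (W *ᵥ b))) * t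
      + (a ⬝ᵥ (W *ᵥ a)) := by
    intro t
    have h0 := psd_nonneg hW (a + t • b)
    have hsym := dot_symm hW.1 b a
    simp only [mulVec_add, mulVec_smul, dotProduct_add, add_dotProduct,
      smul_dotProduct, dotProduct_smul, smul_eq_mul] at h0
    rw [hsym] at h0
    ring_nf at h0 ⊢
    linarith
  have hd := discrim_le_zero key
  rw [discrim] at hd
  nlinarith [hd]

theorem stmt_5 (d K : ℕ) (x : Fin K → (Fin d → ℝ)) (C : Finset (Fin K))
    (lam ζ : ℝ) (hlam : 0 < lam) (η : Fin K → ℝ) (hη : ∀ k, |η k| ≤ ζ)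
    (U : Matrix (Fin d) (Fin d) ℝ)
    (hU : U = lam • (1 : Matrix (Fin d) (Fin d) ℝ) + ∑ k ∈ C, vecMulVec (x k) (x k))
    (y : Fin d → ℝ) :
    |y ⬝ᵥ (U⁻¹ *ᵥ (∑ k ∈ C, η k • x k))|
      ≤ ζ * Real.sqrt (C.card : ℝ) * Real.sqrt (y ⬝ᵥ (U⁻¹ *ᵥ y)) := by
  classical
  rcases C.eq_empty_or_nonempty with hC | hC
  · simp [hC]
  obtain ⟨k₀, hk₀⟩ := hC
  have hζ : 0 ≤ ζ := le_trans (abs_nonneg _) (hη k₀)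
  -- U is positive definite
  have hUpd : U.PosDef := by
    refine Matrix.PosDef.of_dotProduct_mulVec_pos ?_ ?_
    · rw [hU]
      rw [Matrix.IsHermitian, conjTranspose_eq_transpose_of_trivial]
      ext i j
      simp [Matrix.transpose_apply, Matrix.add_apply, Matrix.smul_apply,
        Matrix.one_apply, Matrix.sum_apply, vecMulVec_apply, eq_comm, mul_comm]
    · intro v hv
      have hvv : 0 < v ⬝ᵥ v := by
        have : v ⬝ᵥ v ≠ 0 := fun h => hv (funext fun i => by
          have h1 := Finset.sum_eq_zero_iff_of_nonneg
            (fun j _ => mul_self_nonneg (v j)) |>.mp h i (Finset.mem_univ i)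
          have h2 : v i = 0 := by nlinarith
          simpa using h2)
        have h2 : 0 ≤ v ⬝ᵥ v := Finset.sum_nonneg fun j _ => mul_self_nonneg (v j)
        exact lt_of_le_of_ne h2 (Ne.symm this)
      have hexp : (star v) ⬝ᵥ (U *ᵥ v)
          = lam * (v ⬝ᵥ v) + ∑ k ∈ C, (x k ⬝ᵥ v) ^ 2 := by
        rw [hU]
        simp only [star_trivial, add_mulVec, dotProduct_add, smul_mulVec,
          one_mulVec, dotProduct_smul, smul_eq_mul, sum_mulVec'_s5, dotProduct_sum'_s5,
          dot_vecMulVec]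
        congr 1
        apply Finset.sum_congr rfl; intro k _
        rw [dotProduct_comm v (x k)]; ring
      rw [hexp]
      have : 0 ≤ ∑ k ∈ C, (x k ⬝ᵥ v) ^ 2 :=
        Finset.sum_nonneg fun k _ => sq_nonneg _
      nlinarith
  have hWpd : (U⁻¹).PosDef := hUpd.inv
  have hWpsd := hWpd.posSemidef
  set W := U⁻¹ with hW
  set s : Fin d → ℝ := ∑ k ∈ C, η k • x k with hs
  set v : Fin d → ℝ := W *ᵥ s with hv
  set t : ℝ := s ⬝ᵥ (W *ᵥ s) with ht
  have ht0 : 0 ≤ t := psd_nonneg hWpsd s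
  -- U *ᵥ v = s
  have hUv : U *ᵥ v = s := by
    rw [hv, Matrix.mulVec_mulVec, Matrix.mul_nonsing_inv _ (isUnit_iff_ne_zero.mpr hUpd.det_pos.ne'),
      Matrix.one_mulVec]
  -- ∑ (x k ⬝ᵥ v)^2 ≤ t
  have hsum_sq : ∑ k ∈ C, (x k ⬝ᵥ v) ^ 2 ≤ t := by
    have hvexp : v ⬝ᵥ (U *ᵥ v) = lam * (v ⬝ᵥ v) + ∑ k ∈ C, (x k ⬝ᵥ v) ^ 2 := by
      rw [hU]
      simp only [add_mulVec, dotProduct_add, smul_mulVec,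
        one_mulVec, dotProduct_smul, smul_eq_mul, sum_mulVec'_s5, dotProduct_sum'_s5,
        dot_vecMulVec]
      congr 1
      apply Finset.sum_congr rfl; intro k _
      rw [dotProduct_comm v (x k)]; ring
    have hvs : v ⬝ᵥ (U *ᵥ v) = t := by
      rw [hUv, dotProduct_comm, ht, hv]
    have hvv : 0 ≤ v ⬝ᵥ v := Finset.sum_nonneg fun j _ => mul_self_nonneg (v j)
    nlinarith [hvexp, hvs, hvv]
  -- t = ∑ η k * (x k ⬝ᵥ v)
  have htexp : t = ∑ k ∈ C, η k * (x k ⬝ᵥ v) := by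
    rw [ht, ← hv, hs, sum_dotProduct']
    apply Finset.sum_congr rfl; intro k _
    rw [smul_dotProduct]; rfl
  -- t ≤ ζ * √|C| * √t
  have hstep : t ≤ ζ * Real.sqrt (C.card : ℝ) * Real.sqrt t := by
    have h1 : t ≤ ζ * ∑ k ∈ C, |x k ⬝ᵥ v| := by
      rw [htexp, Finset.mul_sum]
      apply Finset.sum_le_sum; intro k _
      calc η k * (x k ⬝ᵥ v) ≤ |η k * (x k ⬝ᵥ v)| := le_abs_self _
        _ = |η k| * |x k ⬝ᵥ v| := abs_mul _ _
        _ ≤ ζ * |x k ⬝ᵥ v| := mul_le_mul_of_nonneg_right (hη k) (abs_nonneg _)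
    have h2 : (∑ k ∈ C, |x k ⬝ᵥ v|) ^ 2 ≤ (C.card : ℝ) * ∑ k ∈ C, (x k ⬝ᵥ v) ^ 2 := by
      have := sq_sum_le_card_mul_sum_sq (s := C) (f := fun k => |x k ⬝ᵥ v|)
      simpa [sq_abs] using this
    have h3 : ∑ k ∈ C, |x k ⬝ᵥ v| ≤ Real.sqrt ((C.card : ℝ) * t) := by
      rw [← Real.sqrt_sq (Finset.sum_nonneg fun k _ => abs_nonneg _)]
      apply Real.sqrt_le_sqrt
      calc (∑ k ∈ C, |x k ⬝ᵥ v|) ^ 2 ≤ (C.card : ℝ) * ∑ k ∈ C, (x k ⬝ᵥ v) ^ 2 := h2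
        _ ≤ (C.card : ℝ) * t := by
            apply mul_le_mul_of_nonneg_left hsum_sq (Nat.cast_nonneg _)
    calc t ≤ ζ * ∑ k ∈ C, |x k ⬝ᵥ v| := h1
      _ ≤ ζ * Real.sqrt ((C.card : ℝ) * t) := mul_le_mul_of_nonneg_left h3 hζ
      _ = ζ * Real.sqrt (C.card : ℝ) * Real.sqrt t := by
          rw [Real.sqrt_mul (Nat.cast_nonneg _), mul_assoc]
  -- hence √t ≤ ζ√|C|
  have hsqrt_t : Real.sqrt t ≤ ζ * Real.sqrt (C.card : ℝ) := by
    rcases eq_or_lt_of_le ht0 with h0 | h0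
    · rw [← h0, Real.sqrt_zero]; positivity
    · have hst : Real.sqrt t * Real.sqrt t = t := Real.mul_self_sqrt ht0
      have hstpos : 0 < Real.sqrt t := Real.sqrt_pos.mpr h0
      nlinarith [hstep, hst, hstpos]
  -- Cauchy–Schwarz
  have hcs := cs_psd hWpsd y s
  have habs : |y ⬝ᵥ (W *ᵥ s)| ≤ Real.sqrt (y ⬝ᵥ (W *ᵥ y)) * Real.sqrt t := by
    rw [← Real.sqrt_mul_self (abs_nonneg _), abs_mul_abs_self,
      ← Real.sqrt_mul (psd_nonneg hWpsd y)]
    apply Real.sqrt_le_sqrt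
    calc (y ⬝ᵥ (W *ᵥ s)) * (y ⬝ᵥ (W *ᵥ s)) = (y ⬝ᵥ (W *ᵥ s)) ^ 2 := (sq _).symm
      _ ≤ (y ⬝ᵥ (W *ᵥ y)) * t := hcs
  calc |y ⬝ᵥ (W *ᵥ s)| ≤ Real.sqrt (y ⬝ᵥ (W *ᵥ y)) * Real.sqrt t := habs
    _ ≤ Real.sqrt (y ⬝ᵥ (W *ᵥ y)) * (ζ * Real.sqrt (C.card : ℝ)) :=
        mul_le_mul_of_nonneg_left hsqrt_t (Real.sqrt_nonneg _)
    _ = ζ * Real.sqrt (C.card : ℝ) * Real.sqrt (y ⬝ᵥ (W *ᵥ y)) := by ring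
end

section
/- Let x₁, …, xₙ ∈ ℝ^d with ‖xᵢ‖₂ ≤ L for all i, let λ > 0, and define U = λI + ∑_{i=1}^n xᵢxᵢᵀ. Then det(U) ≤ (λ + nL²/d)^d. -/
open Matrix in
theorem stmt_7 (d n : ℕ) (x : Fin n → (Fin d → ℝ)) (L lam : ℝ) (hlam : 0 < lam)
    (hL : ∀ i, Real.sqrt (x i ⬝ᵥ x i) ≤ L)
    (U : Matrix (Fin d) (Fin d) ℝ)
    (hU : U = lam • (1 : Matrix (Fin d) (Fin d) ℝ) + ∑ i, vecMulVec (x i) (x i)) :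
    U.det ≤ (lam + (n : ℝ) * L ^ 2 / (d : ℝ)) ^ d := by
  rcases Nat.eq_zero_or_pos d with hd | hd
  · subst hd
    simp [Matrix.det_fin_zero]
  have hd' : (0 : ℝ) < d := by exact_mod_cast hd
  -- each vecMulVec term is PSD
  have hterm : ∀ i, (vecMulVec (x i) (x i)).PosSemidef := by
    intro i
    have : vecMulVec (x i) (x i) = replicateCol (Fin 1) (x i) * (replicateCol (Fin 1) (x i))ᴴ := by
      rw [conjTranspose_replicateCol]
      simp [vecMulVec_eq (Fin 1)]
      rfl
    rw [this]
    exact posSemidef_self_mul_conjTranspose _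
  have hsum : (∑ i, vecMulVec (x i) (x i)).PosSemidef := by
    apply Finset.sum_induction _ Matrix.PosSemidef
    · exact fun a b ha hb => ha.add hb
    · exact Matrix.PosSemidef.zero
    · exact fun i _ => hterm i
  have hUpsd : U.PosSemidef := by
    rw [hU]
    have hsm : (lam • (1 : Matrix (Fin d) (Fin d) ℝ)).PosSemidef := by
      rw [posSemidef_iff_dotProduct_mulVec]
      constructor
      · simp [Matrix.IsHermitian]
      · intro v
        simp only [Matrix.smul_mulVec, Matrix.one_mulVec, dotProduct_smul,
          smul_eq_mul]
        exact mul_nonneg hlam.le (dotProduct_star_self_nonneg v)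
    exact hsm.add hsum
  have hH : U.IsHermitian := hUpsd.1
  -- trace of U
  have hxx : ∀ i, x i ⬝ᵥ x i ≤ L ^ 2 := by
    intro i
    have h0 : 0 ≤ x i ⬝ᵥ x i := by
      simpa [dotProduct] using Finset.sum_nonneg fun j _ => mul_self_nonneg (x i j)
    calc x i ⬝ᵥ x i = Real.sqrt (x i ⬝ᵥ x i) ^ 2 := (Real.sq_sqrt h0).symm
      _ ≤ L ^ 2 := pow_le_pow_left₀ (Real.sqrt_nonneg _) (hL i) 2
  have htrace : U.trace ≤ d * lam + n * L ^ 2 := by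
    rw [hU]
    rw [trace_add, trace_smul, trace_one, trace_sum]
    have : ∀ i : Fin n, (vecMulVec (x i) (x i)).trace = x i ⬝ᵥ x i := by
      intro i
      simp [Matrix.trace, Matrix.diag, vecMulVec_apply, dotProduct]
    rw [Finset.sum_congr rfl fun i _ => this i]
    have : ∑ i : Fin n, x i ⬝ᵥ x i ≤ ∑ _i : Fin n, L ^ 2 :=
      Finset.sum_le_sum fun i _ => hxx i
    simp only [Finset.sum_const, Finset.card_univ, Fintype.card_fin, nsmul_eq_mul,
      smul_eq_mul] at this ⊢
    linarith
  -- trace = sum of eigenvalues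
  have htr_eq : U.trace = ∑ i, hH.eigenvalues i := by
    conv_lhs => rw [hH.spectral_theorem, Unitary.conjStarAlgAut_apply]
    rw [Matrix.trace_mul_cycle]
    rw [(Matrix.mem_unitaryGroup_iff').mp (hH.eigenvectorUnitary).2, Matrix.one_mul]
    simp [Matrix.trace_diagonal]
  have hev_nonneg : ∀ i, 0 ≤ hH.eigenvalues i := hUpsd.eigenvalues_nonneg
  -- det = prod of eigenvalues
  have hdet : U.det = ∏ i, hH.eigenvalues i := hH.det_eq_prod_eigenvalues
  -- AM-GM
  have hw : ∀ i ∈ (Finset.univ : Finset (Fin d)), (0:ℝ) ≤ (d:ℝ)⁻¹ :=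
    fun _ _ => inv_nonneg.mpr hd'.le
  have hw' : ∑ _i ∈ (Finset.univ : Finset (Fin d)), (d:ℝ)⁻¹ = 1 := by
    simp [Finset.sum_const]
    field_simp
  have hamgm := Real.geom_mean_le_arith_mean_weighted Finset.univ (fun _ => (d:ℝ)⁻¹)
    hH.eigenvalues hw hw' (fun i _ => hev_nonneg i)
  have hprod : (∏ i, hH.eigenvalues i) ^ ((d:ℝ)⁻¹) ≤ U.trace / d := by
    rw [← Real.finset_prod_rpow _ _ (fun i _ => hev_nonneg i)]
    calc (∏ i, hH.eigenvalues i ^ ((d:ℝ)⁻¹))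
        ≤ ∑ i, (d:ℝ)⁻¹ * hH.eigenvalues i := hamgm
      _ = U.trace / d := by
          rw [htr_eq, ← Finset.mul_sum, div_eq_inv_mul]
  have hprodnn : 0 ≤ ∏ i, hH.eigenvalues i := Finset.prod_nonneg fun i _ => hev_nonneg i
  have hdet_le : U.det ≤ (U.trace / d) ^ d := by
    have h1 : ((∏ i, hH.eigenvalues i) ^ ((d:ℝ)⁻¹)) ^ (d:ℝ) ≤ (U.trace / d) ^ (d:ℝ) :=
      Real.rpow_le_rpow (Real.rpow_nonneg hprodnn _) hprod hd'.le
    have h2 : (∏ i, hH.eigenvalues i) ≤ (U.trace / d) ^ (d:ℝ) := by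
      calc (∏ i, hH.eigenvalues i)
          = ((∏ i, hH.eigenvalues i) ^ ((d:ℝ)⁻¹)) ^ (d:ℝ) := by
            rw [← Real.rpow_mul hprodnn, inv_mul_cancel₀ (ne_of_gt hd'), Real.rpow_one]
        _ ≤ _ := h1
    rw [hdet, ← Real.rpow_natCast (U.trace / d) d]
    exact h2
  calc U.det ≤ (U.trace / d) ^ d := hdet_le
    _ ≤ (lam + (n : ℝ) * L ^ 2 / (d : ℝ)) ^ d := by
        apply pow_le_pow_left₀
        · exact le_trans (Real.rpow_nonneg hprodnn _) hprod
        · rw [div_le_iff₀ hd']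
          have : (lam + (n : ℝ) * L ^ 2 / (d : ℝ)) * d = d * lam + n * L ^ 2 := by
            field_simp
          rw [this]
          exact htrace
end

section
/- Let λ > 0 and let U₀ = λI. For a sequence of vectors φ₁, …, φ_I ∈ ℝ^d with ‖φⱼ‖₂ ≤ L, define Uᵢ = λI + ∑_{j=1}^i φⱼφⱼᵀ. Then ∑_{i=1}^I min{1, ‖φᵢ‖²_{U_{i−1}⁻¹}} ≤ 2d·log((λd + I·L²)/(λd)). -/
open Matrix in
lemma aux_min_le_log {x : ℝ} (hx : 0 ≤ x) : min 1 x ≤ 2 * Real.log (1 + x) := by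
  rcases le_or_gt x 1 with h | h
  · rw [min_eq_right h]
    have hh : x / 2 ≤ Real.log (1 + x) := by
      rw [Real.le_log_iff_exp_le (by linarith)]
      have h2 : Real.exp (x/2) ≤ 1/(1 - x/2) := by
        have h3 := Real.add_one_le_exp (-(x/2))
        rw [Real.exp_neg] at h3
        rw [le_div_iff₀ (by linarith)]
        have hpos : (0:ℝ) < Real.exp (x/2) := Real.exp_pos _
        nlinarith [Real.exp_pos (x/2), mul_inv_cancel₀ (Real.exp_pos (x/2)).ne']
      have h3 : 1/(1 - x/2) ≤ 1 + x := by
        rw [div_le_iff₀ (by linarith)]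
        nlinarith
      linarith
    linarith
  · rw [min_eq_left h.le]
    rw [show (1:ℝ) = 2 * (1/2) by norm_num]
    have hh : (1:ℝ)/2 ≤ Real.log (1 + x) := by
      rw [Real.le_log_iff_exp_le (by linarith)]
      have h1 : Real.exp (1/2) * Real.exp (1/2) = Real.exp 1 := by
        rw [← Real.exp_add]; norm_num
      nlinarith [Real.exp_one_lt_d9, Real.exp_pos (1/2 : ℝ)]
    linarith

lemma aux_prod_le {d : ℕ} (hd : 0 < d) (f : Fin d → ℝ) (hf : ∀ i, 0 ≤ f i) :
    ∏ i, f i ≤ ((∑ i, f i) / d) ^ d := by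
  have hdne : (d:ℝ) ≠ 0 := Nat.cast_ne_zero.mpr hd.ne'
  have hw : ∑ _i : Fin d, (1/d : ℝ) = 1 := by
    simp [Finset.sum_const]
    field_simp
  have key := Real.geom_mean_le_arith_mean_weighted Finset.univ (fun _ => (1:ℝ)/d) f
    (fun i _ => by positivity) hw (fun i _ => hf i)
  have hsum : ∑ i, (1/d : ℝ) * f i = (∑ i, f i) / d := by
    rw [← Finset.mul_sum]; ring
  rw [hsum] at key
  have hnn : 0 ≤ ∏ i, f i ^ ((1:ℝ)/d) := Finset.prod_nonneg fun i _ => Real.rpow_nonneg (hf i) _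
  have key2 := pow_le_pow_left₀ hnn key d
  rw [← Finset.prod_pow] at key2
  have heq : ∀ i : Fin d, (f i ^ ((1:ℝ)/d)) ^ d = f i := by
    intro i
    rw [← Real.rpow_natCast (f i ^ ((1:ℝ)/d)) d, ← Real.rpow_mul (hf i), one_div,
      inv_mul_cancel₀ hdne, Real.rpow_one]
  calc ∏ i, f i = ∏ i, (f i ^ ((1:ℝ)/d)) ^ d := by
        exact Finset.prod_congr rfl fun i _ => (heq i).symm
    _ ≤ ((∑ i, f i) / d) ^ d := key2

open Matrix in
lemma aux_trace_eigen {n : Type*} [Fintype n] [DecidableEq n] {A : Matrix n n ℝ}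
    (hA : A.IsHermitian) : A.trace = ∑ i, hA.eigenvalues i := by
  nth_rewrite 1 [hA.spectral_theorem]
  rw [Unitary.conjStarAlgAut_apply]
  rw [Matrix.trace_mul_comm, ← Matrix.mul_assoc,
    (Matrix.mem_unitaryGroup_iff'.mp (hA.eigenvectorUnitary).2), Matrix.one_mul]
  simp [Matrix.trace_diagonal]

open Matrix in
lemma aux_det_le_trace {d : ℕ} (hd : 0 < d) {A : Matrix (Fin d) (Fin d) ℝ}
    (hA : A.PosSemidef) : A.det ≤ (A.trace / d) ^ d := by
  rw [hA.1.det_eq_prod_eigenvalues, aux_trace_eigen hA.1]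
  exact aux_prod_le hd _ hA.eigenvalues_nonneg

open Matrix in
theorem stmt_9 (d I : ℕ) (φ : ℕ → (Fin d → ℝ)) (L lam : ℝ) (hlam : 0 < lam)
    (hL : ∀ j, Real.sqrt (φ j ⬝ᵥ φ j) ≤ L)
    (U : ℕ → Matrix (Fin d) (Fin d) ℝ)
    (hU : ∀ i, U i = lam • (1 : Matrix (Fin d) (Fin d) ℝ)
        + ∑ j ∈ Finset.range i, vecMulVec (φ j) (φ j)) :
    ∑ i ∈ Finset.range I, min 1 (φ i ⬝ᵥ ((U i)⁻¹ *ᵥ φ i))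
      ≤ 2 * (d : ℝ) * Real.log ((lam * d + (I : ℝ) * L ^ 2) / (lam * d)) := by
  rcases Nat.eq_zero_or_pos d with hd | hd
  · subst hd
    simp [dotProduct]
  have hdR : (0:ℝ) < d := by exact_mod_cast hd
  have hL0 : 0 ≤ L := le_trans (Real.sqrt_nonneg _) (hL 0)
  have hφφ : ∀ j, 0 ≤ φ j ⬝ᵥ φ j := fun j => Finset.sum_nonneg fun i _ => mul_self_nonneg _
  have hφL : ∀ j, φ j ⬝ᵥ φ j ≤ L ^ 2 := by
    intro j
    nlinarith [hL j, Real.sq_sqrt (hφφ j), Real.sqrt_nonneg (φ j ⬝ᵥ φ j)]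
  -- PSD of rank-one pieces
  have hmv : ∀ (u x : Fin d → ℝ), vecMulVec u u *ᵥ x = (u ⬝ᵥ x) • u := by
    intro u x
    ext i
    simp only [Matrix.mulVec, dotProduct, Matrix.vecMulVec_apply, Pi.smul_apply,
      smul_eq_mul, Finset.sum_mul]
    exact Finset.sum_congr rfl fun k _ => by ring
  have hvv : ∀ j, (vecMulVec (φ j) (φ j)).PosSemidef := by
    intro j
    apply Matrix.PosSemidef.of_dotProduct_mulVec_nonneg
    · ext i k
      simp [Matrix.vecMulVec_apply, mul_comm]
    · intro x
      rw [hmv]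
      simp only [star_trivial, dotProduct_smul, smul_eq_mul]
      rw [dotProduct_comm]
      exact mul_self_nonneg _
  have hsumPSD : ∀ i, (∑ j ∈ Finset.range i, vecMulVec (φ j) (φ j)).PosSemidef := fun i =>
    Finset.sum_induction _ _ (fun a b ha hb => ha.add hb) Matrix.PosSemidef.zero
      (fun j _ => hvv j)
  have hdiag : (lam • (1 : Matrix (Fin d) (Fin d) ℝ)).PosDef := by
    rw [Matrix.smul_one_eq_diagonal]
    exact Matrix.posDef_diagonal_iff.mpr fun _ => hlam
  have hPD : ∀ i, (U i).PosDef := fun i => by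
    rw [hU i]; exact hdiag.add_posSemidef (hsumPSD i)
  have hdet0 : ∀ i, 0 < (U i).det := fun i => (hPD i).det_pos
  have hx : ∀ i, 0 ≤ φ i ⬝ᵥ ((U i)⁻¹ *ᵥ φ i) := by
    intro i
    simpa using ((hPD i).inv).posSemidef.dotProduct_mulVec_nonneg (φ i)
  -- matrix determinant lemma step
  have hdetsucc : ∀ i, (U (i+1)).det = (U i).det * (1 + φ i ⬝ᵥ ((U i)⁻¹ *ᵥ φ i)) := by
    intro i
    have hstep : U (i+1) = U i + Matrix.replicateCol Unit (φ i) * Matrix.replicateRow Unit (φ i) := by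
      rw [hU (i+1), hU i, Finset.sum_range_succ, ← add_assoc, Matrix.vecMulVec_eq Unit]
    rw [hstep, Matrix.det_add_replicateCol_mul_replicateRow (hdet0 i).ne'.isUnit]
    congr 1
    rw [Matrix.det_unique, Matrix.mul_assoc, ← Matrix.replicateCol_mulVec]
    simp [Matrix.replicateRow_mul_replicateCol_apply]
  have hlogstep : ∀ i, Real.log ((U (i+1)).det) - Real.log ((U i).det)
      = Real.log (1 + φ i ⬝ᵥ ((U i)⁻¹ *ᵥ φ i)) := by
    intro i
    rw [hdetsucc i, Real.log_mul (hdet0 i).ne' (by nlinarith [hx i])]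
    ring
  have tele := Finset.sum_range_sub (fun i => Real.log ((U i).det)) I
  -- trace bound
  set T : ℝ := lam * d + (I:ℝ) * L ^ 2 with hT
  have hTpos : 0 < T := by positivity
  have htr : (U I).trace ≤ T := by
    rw [hU I, Matrix.trace_add, Matrix.trace_smul, Matrix.trace_one, Matrix.trace_sum]
    have h1 : ∀ j ∈ Finset.range I, (vecMulVec (φ j) (φ j)).trace ≤ L ^ 2 := by
      intro j _
      rw [Matrix.vecMulVec_eq Unit, Matrix.trace_replicateCol_mul_replicateRow]
      exact hφL j
    have h2 := Finset.sum_le_card_nsmul _ _ _ h1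
    simp only [Finset.card_range, nsmul_eq_mul] at h2
    have : lam • (Fintype.card (Fin d) : ℝ) = lam * d := by
      simp [smul_eq_mul]
    rw [this]
    linarith
  have htrnn : 0 ≤ (U I).trace := by
    rw [aux_trace_eigen (hPD I).posSemidef.1]
    exact Finset.sum_nonneg fun i _ => (hPD I).posSemidef.eigenvalues_nonneg i
  have hdetI : (U I).det ≤ (T / d) ^ d := by
    refine le_trans (aux_det_le_trace hd (hPD I).posSemidef) ?_
    exact pow_le_pow_left₀ (by positivity) (by gcongr) d
  have hlog1 : Real.log ((U I).det) ≤ d * Real.log (T / d) := by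
    calc Real.log ((U I).det) ≤ Real.log ((T/d)^d) := Real.log_le_log (hdet0 I) hdetI
      _ = d * Real.log (T/d) := by rw [Real.log_pow]
  have hdetU0 : (U 0).det = lam ^ d := by
    rw [hU 0]
    simp [Matrix.det_smul]
  calc ∑ i ∈ Finset.range I, min 1 (φ i ⬝ᵥ ((U i)⁻¹ *ᵥ φ i))
      ≤ ∑ i ∈ Finset.range I, 2 * Real.log (1 + φ i ⬝ᵥ ((U i)⁻¹ *ᵥ φ i)) :=
        Finset.sum_le_sum fun i _ => aux_min_le_log (hx i)
    _ = 2 * (Real.log ((U I).det) - Real.log ((U 0).det)) := by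
        rw [← tele, Finset.mul_sum]
        exact Finset.sum_congr rfl fun i _ => by rw [← hlogstep i]
    _ ≤ 2 * ((d:ℝ) * Real.log (T/d) - (d:ℝ) * Real.log lam) := by
        rw [hdetU0, Real.log_pow]
        have h := hlog1
        linarith
    _ = 2 * (d:ℝ) * Real.log (T / (lam * (d:ℝ))) := by
        rw [show T / (lam * (d:ℝ)) = (T/(d:ℝ))/lam by rw [div_div, mul_comm],
          Real.log_div (by positivity) hlam.ne']
        ring
end

section
/- Suppose Γ², |C|, d, L, B are positive reals with 2L²B² ≥ Γ², d ≥ 1, and Γ²|C| ≤ 2d·log(1 + (2L²/(Γ²λ))·(Γ²|C|/(2d))) with λ = B⁻². Then Γ²|C|/(2d) ≤ 8·log(3LB/Γ). -/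
lemma log_le_half_aux (x : ℝ) (hx : 0 < x) : Real.log x ≤ x / 2 := by
  have hsq : Real.sqrt x ^ 2 = x := Real.sq_sqrt hx.le
  have h1 : Real.log (Real.sqrt x) ≤ Real.sqrt x - 1 :=
    Real.log_le_sub_one_of_pos (Real.sqrt_pos.2 hx)
  have h2 : Real.log (Real.sqrt x) = Real.log x / 2 := Real.log_sqrt hx.le
  nlinarith [sq_nonneg (Real.sqrt x - 2)]

lemma core_aux (a s x : ℝ) (ha1 : 1 ≤ a) (hspos : 0 < s) (hs2 : s ^ 2 = 9 / 2 * a)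
    (hxpos : 0 < x) (hkey : x ≤ Real.log (1 + a * x)) : x ≤ 8 * Real.log s := by
  have hs_ge : 2 ≤ s := by nlinarith [sq_nonneg (s - 2)]
  have hlogs : Real.log 2 ≤ Real.log s := Real.log_le_log two_pos hs_ge
  have hlog2 : (0.6931471803 : ℝ) < Real.log 2 := Real.log_two_gt_d9
  by_cases hx1 : x ≤ 1
  · nlinarith
  · push_neg at hx1
    have hax : 1 ≤ a * x := by nlinarith
    have h2ax : 1 + a * x ≤ 2 * (a * x) := by nlinarith
    have hlog1 : Real.log (1 + a * x) ≤ Real.log (2 * a) + Real.log x := by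
      calc Real.log (1 + a * x) ≤ Real.log (2 * (a * x)) :=
            Real.log_le_log (by positivity) h2ax
        _ = Real.log (2 * a) + Real.log x := by
            rw [← mul_assoc, Real.log_mul (by positivity) (ne_of_gt hxpos)]
    have hlogx : Real.log x ≤ x / 2 := log_le_half_aux x hxpos
    have hx2log : x ≤ 2 * Real.log (2 * a) := by linarith
    have h2a_le : 2 * a ≤ s ^ 4 := by nlinarith
    have : Real.log (2 * a) ≤ 4 * Real.log s := by
      calc Real.log (2 * a) ≤ Real.log (s ^ 4) :=
            Real.log_le_log (by positivity) h2a_le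
        _ = 4 * Real.log s := by rw [Real.log_pow]; norm_num
    linarith

theorem stmt_13 (Γ C d L B lam : ℝ)
    (hΓ : 0 < Γ) (hC : 0 < C) (hL : 0 < L) (hB : 0 < B)
    (hd : 1 ≤ d) (hΓLB : Γ ^ 2 ≤ 2 * L ^ 2 * B ^ 2) (hlam : lam = B⁻¹ ^ 2)
    (h : Γ ^ 2 * C ≤ 2 * d * Real.log (1 + (2 * L ^ 2 / (Γ ^ 2 * lam)) * (Γ ^ 2 * C / (2 * d)))) :
    Γ ^ 2 * C / (2 * d) ≤ 8 * Real.log (3 * L * B / Γ) := by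
  have hd0 : (0:ℝ) < 2 * d := by linarith
  have hΓ2 : (0:ℝ) < Γ ^ 2 := by positivity
  have ha1 : 1 ≤ 2 * L ^ 2 * B ^ 2 / Γ ^ 2 := (one_le_div hΓ2).2 hΓLB
  have hcoef : 2 * L ^ 2 / (Γ ^ 2 * lam) = 2 * L ^ 2 * B ^ 2 / Γ ^ 2 := by
    rw [hlam]; field_simp
  have hxpos : 0 < Γ ^ 2 * C / (2 * d) := by positivity
  have hspos : (0:ℝ) < 3 * L * B / Γ := by positivity
  have hs2 : (3 * L * B / Γ) ^ 2 = 9 / 2 * (2 * L ^ 2 * B ^ 2 / Γ ^ 2) := by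
    field_simp; ring
  have hkey : Γ ^ 2 * C / (2 * d) ≤
      Real.log (1 + (2 * L ^ 2 * B ^ 2 / Γ ^ 2) * (Γ ^ 2 * C / (2 * d))) := by
    rw [hcoef] at h
    rw [div_le_iff₀ hd0]
    linarith
  exact core_aux _ _ _ ha1 hspos hs2 hxpos hkey
end
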